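/- In Case a), the set J := {λ^X ∈ Λ : λ^X_i = 0 for all i ∉ I and Σ_{i∈I} λ^X_i/p^Y_i ≤ 1/p^X_max} satisfies J = {λ^X : there exists λ^Y ∈ Λ with (λ^X,λ^Y) ∈ K_{Λ²}}. -/
import Mathlib


open MeasureTheory ProbabilityTheory Filter Finset Topology

noncomputable section

attribute [local instance] Classical.propDecidable

/-- The simplex `Λ` of probability vectors on `{1,…,m}`. -/
def Lam (m : ℕ) : Set (Fin m → ℝ) := {l | (∀ i, 0 ≤ l i) ∧ ∑ i, l i = 1}

/-- `f(λ^X, λ^Y) = Σ_i min (p^X_i λ^X_i) (p^Y_i λ^Y_i)`. -/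
def fobj {m : ℕ} (pX pY : Fin m → ℝ) (l : (Fin m → ℝ) × (Fin m → ℝ)) : ℝ :=
  ∑ i, min (pX i * l.1 i) (pY i * l.2 i)

/-- `e_max`, the maximum of `f` over `Λ²`. -/
def emax {m : ℕ} (pX pY : Fin m → ℝ) : ℝ :=
  sSup (fobj pX pY '' (Lam m ×ˢ Lam m))

/-- The set `U`. -/
def Uset {m : ℕ} (pX pY : Fin m → ℝ) : Set (Fin m → ℝ) :=
  {u | (∀ i, 0 ≤ u i) ∧ (∑ i, u i / pX i) ≤ 1 ∧ (∑ i, u i / pY i) ≤ 1}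

/-- The set `L_U` of maximizers of `φ(u) = Σ_i u_i` over `U`. -/
def LU {m : ℕ} (pX pY : Fin m → ℝ) : Set (Fin m → ℝ) :=
  {u ∈ Uset pX pY | ∑ i, u i = emax pX pY}

/-- The set `I` of letters usable in a maximizer. -/
def Iset {m : ℕ} (pX pY : Fin m → ℝ) : Set (Fin m) :=
  {i | ∃ u ∈ LU pX pY, 0 < u i}

/-- Case a): some maximizer saturates the `X` constraint but not the `Y` one. -/
def CaseA {m : ℕ} (pX pY : Fin m → ℝ) : Prop :=
  ∃ u ∈ LU pX pY, (∑ i, u i / pX i) = 1 ∧ (∑ i, u i / pY i) < 1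

/-- Case b): every maximizer saturates both constraints. -/
def CaseB {m : ℕ} (pX pY : Fin m → ℝ) : Prop :=
  ∀ u ∈ LU pX pY, (∑ i, u i / pX i) = 1 ∧ (∑ i, u i / pY i) = 1

/-- Case b1): Case b) and the vectors `(1/p^X_i)_{i∈I}` and `(1/p^Y_i)_{i∈I}` coincide. -/
def CaseB1 {m : ℕ} (pX pY : Fin m → ℝ) : Prop :=
  CaseB pX pY ∧ ∀ i ∈ Iset pX pY, (pX i)⁻¹ = (pY i)⁻¹

/-- Case b2): Case b) and the vectors `(1/p^X_i)_{i∈I}` and `(1/p^Y_i)_{i∈I}` differ. -/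
def CaseB2 {m : ℕ} (pX pY : Fin m → ℝ) : Prop :=
  CaseB pX pY ∧ ¬ (∀ i ∈ Iset pX pY, (pX i)⁻¹ = (pY i)⁻¹)

/-- The set `K_{Λ²}` of maximizers of `f` over `Λ²`. -/
def Kset {m : ℕ} (pX pY : Fin m → ℝ) : Set ((Fin m → ℝ) × (Fin m → ℝ)) :=
  {l ∈ Lam m ×ˢ Lam m | fobj pX pY l = emax pX pY}

/-- `p^X_max`. -/
def pXmax {m : ℕ} (pX : Fin m → ℝ) : ℝ := ⨆ i, pX i

/-- The set `J` (Case a)). -/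
def Jset {m : ℕ} (pX pY : Fin m → ℝ) : Set (Fin m → ℝ) :=
  {l ∈ Lam m | (∀ i ∉ Iset pX pY, l i = 0) ∧
    (∑ i ∈ Finset.univ.filter (· ∈ Iset pX pY), l i / pY i) ≤ 1 / pXmax pX}

/-- `E = {x : Σ_i x_i = 0}`. -/
def Eset (m : ℕ) : Set (Fin m → ℝ) := {x | ∑ i, x i = 0}

/-- `E' = {x ∈ E : x_i ≥ 0 for i ∉ I}`. -/
def E'set {m : ℕ} (pX pY : Fin m → ℝ) : Set (Fin m → ℝ) :=
  {x ∈ Eset m | ∀ i ∉ Iset pX pY, 0 ≤ x i}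

/-- The function `𝔪` of Lemma 1.4. -/
def mfrak {m : ℕ} (pX pY : Fin m → ℝ) (ν : (Fin m → ℝ) × (Fin m → ℝ)) : ℝ :=
  sSup ((fun x : (Fin m → ℝ) × (Fin m → ℝ) =>
      ∑ i, min (pX i * x.1 i + ν.1 i) (pY i * x.2 i + ν.2 i)) ''
    (E'set pX pY ×ˢ E'set pX pY))

/-- Partial sum `λ_1 + … + λ_i`. -/
def psumLe {m : ℕ} (l : Fin m → ℝ) (i : Fin m) : ℝ :=
  ∑ j ∈ Finset.univ.filter (· ≤ i), l j

/-- Partial sum `λ_1 + … + λ_{i-1}`. -/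
def psumLt {m : ℕ} (l : Fin m → ℝ) (i : Fin m) : ℝ :=
  ∑ j ∈ Finset.univ.filter (· < i), l j

/-- `e(i,j)`. -/
def eij {m : ℕ} (pX pY : Fin m → ℝ) (i j : Fin m) : ℝ :=
  (pX i * pY i * (pX j - pY j) + pX j * pY j * (pY i - pX i)) /
    (pY i * pX j - pX i * pY j)

/-- The set `S` of admissible pairs `(i,j)` in the representation of `e_max`. -/
def Sset {m : ℕ} (pX pY : Fin m → ℝ) : Set (Fin m × Fin m) :=
  {ij | pX ij.1 < pX ij.2 ∧ pY ij.2 < pY ij.1 ∧ pX ij.1 < pY ij.1 ∧ pY ij.2 < pX ij.2}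

/-- `e_1 = max_i min(p^X_i, p^Y_i)`. -/
def e1 {m : ℕ} (pX pY : Fin m → ℝ) : ℝ := ⨆ i, min (pX i) (pY i)

/-- `e_2 = max_{(i,j)∈S} e(i,j)` (with `sSup ∅ = 0` when `S` is empty). -/
def e2 {m : ℕ} (pX pY : Fin m → ℝ) : ℝ :=
  sSup ((fun ij : Fin m × Fin m => eij pX pY ij.1 ij.2) '' Sset pX pY)


section AuxCaseA

variable {m : ℕ} {pX pY : Fin m → ℝ}

lemma pXmax_spec (hm : 0 < m) :
    (∀ j, pX j ≤ pXmax pX) ∧ ∃ i0, pX i0 = pXmax pX := by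
  have : Nonempty (Fin m) := ⟨⟨0, hm⟩⟩
  obtain ⟨i0, hi0⟩ := Finite.exists_max pX
  have h1 : pXmax pX = pX i0 :=
    le_antisymm (ciSup_le hi0) (le_ciSup (Set.finite_range pX).bddAbove i0)
  exact ⟨fun j => h1 ▸ hi0 j, i0, h1.symm⟩

lemma pXmax_pos (hm : 0 < m) (hpX : ∀ i, 0 < pX i) : 0 < pXmax pX := by
  obtain ⟨-, i0, hi0⟩ := pXmax_spec (pX := pX) hm
  exact hi0 ▸ hpX i0

lemma uniform_mem_Lam (hm : 0 < m) : (fun _ : Fin m => (m : ℝ)⁻¹) ∈ Lam m := by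
  have hm' : (m : ℝ) ≠ 0 := Nat.cast_ne_zero.mpr hm.ne'
  refine ⟨fun _ => by positivity, ?_⟩
  simp [Finset.sum_const, Finset.card_univ, mul_inv_cancel₀ hm']

lemma fobj_le_pXmax (hm : 0 < m) {l : (Fin m → ℝ) × (Fin m → ℝ)}
    (hl : l ∈ Lam m ×ˢ Lam m) : fobj pX pY l ≤ pXmax pX := by
  obtain ⟨⟨h1n, h1s⟩, -⟩ := hl
  obtain ⟨hle, -⟩ := pXmax_spec (pX := pX) hm
  calc fobj pX pY l ≤ ∑ i, pXmax pX * l.1 i := by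
        refine Finset.sum_le_sum fun i _ => (min_le_left _ _).trans ?_
        exact mul_le_mul_of_nonneg_right (hle i) (h1n i)
    _ = pXmax pX := by rw [← Finset.mul_sum, h1s, mul_one]

lemma fobj_le_emax (hm : 0 < m) {l : (Fin m → ℝ) × (Fin m → ℝ)}
    (hl : l ∈ Lam m ×ˢ Lam m) : fobj pX pY l ≤ emax pX pY := by
  refine le_csSup ⟨pXmax pX, ?_⟩ ⟨l, hl, rfl⟩
  rintro x ⟨l', hl', rfl⟩
  exact fobj_le_pXmax hm hl'

lemma emax_le_pXmax (hm : 0 < m) : emax pX pY ≤ pXmax pX := by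
  refine csSup_le ⟨_, ⟨((fun _ => (m : ℝ)⁻¹), (fun _ => (m : ℝ)⁻¹)),
    ⟨uniform_mem_Lam hm, uniform_mem_Lam hm⟩, rfl⟩⟩ ?_
  rintro x ⟨l, hl, rfl⟩
  exact fobj_le_pXmax hm hl

lemma sum_le_emax (hm : 0 < m) (hpX : ∀ i, 0 < pX i) (hpY : ∀ i, 0 < pY i)
    {u : Fin m → ℝ} (hu0 : ∀ i, 0 ≤ u i)
    (hX : ∑ i, u i / pX i ≤ 1) (hY : ∑ i, u i / pY i ≤ 1) :
    ∑ i, u i ≤ emax pX pY := by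
  have hm' : (0 : ℝ) < m := by exact_mod_cast hm
  set sX := ∑ i, u i / pX i with hsX
  set sY := ∑ i, u i / pY i with hsY
  set lX : Fin m → ℝ := fun i => u i / pX i + (1 - sX) / m with hlX
  set lY : Fin m → ℝ := fun i => u i / pY i + (1 - sY) / m with hlY
  have hlXmem : lX ∈ Lam m := by
    refine ⟨fun i => ?_, ?_⟩
    · have h1 : 0 ≤ u i / pX i := div_nonneg (hu0 i) (hpX i).le
      have h2 : 0 ≤ (1 - sX) / m := div_nonneg (by linarith) hm'.le
      simp only [hlX]; linarith
    rw [hlX]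
    rw [Finset.sum_add_distrib, Finset.sum_const, Finset.card_univ, Fintype.card_fin,
      nsmul_eq_mul, mul_div_cancel₀ _ hm'.ne', ← hsX]
    ring
  have hlYmem : lY ∈ Lam m := by
    refine ⟨fun i => ?_, ?_⟩
    · have h1 : 0 ≤ u i / pY i := div_nonneg (hu0 i) (hpY i).le
      have h2 : 0 ≤ (1 - sY) / m := div_nonneg (by linarith) hm'.le
      simp only [hlY]; linarith
    rw [hlY]
    rw [Finset.sum_add_distrib, Finset.sum_const, Finset.card_univ, Fintype.card_fin,
      nsmul_eq_mul, mul_div_cancel₀ _ hm'.ne', ← hsY]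
    ring
  have key : ∑ i, u i ≤ fobj pX pY (lX, lY) := by
    refine Finset.sum_le_sum fun i _ => le_min ?_ ?_
    · have : pX i * lX i = u i + pX i * ((1 - sX) / m) := by
        simp only [hlX]
        rw [mul_add, mul_comm (pX i) (u i / pX i), div_mul_cancel₀ _ (hpX i).ne']
      rw [this]
      have : 0 ≤ pX i * ((1 - sX) / m) :=
        mul_nonneg (hpX i).le (div_nonneg (by linarith) hm'.le)
      linarith
    · have : pY i * lY i = u i + pY i * ((1 - sY) / m) := by
        simp only [hlY]
        rw [mul_add, mul_comm (pY i) (u i / pY i), div_mul_cancel₀ _ (hpY i).ne']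
      rw [this]
      have : 0 ≤ pY i * ((1 - sY) / m) :=
        mul_nonneg (hpY i).le (div_nonneg (by linarith) hm'.le)
      linarith
  exact key.trans (fobj_le_emax hm ⟨hlXmem, hlYmem⟩)

/-- Perturbation of a maximizer with slack `Y`-constraint towards a coordinate of
maximal `pX`. -/
lemma pert (hm : 0 < m) (hpX : ∀ i, 0 < pX i) (hpY : ∀ i, 0 < pY i)
    {u : Fin m → ℝ} (hu0 : ∀ i, 0 ≤ u i)
    (hX : ∑ j, u j / pX j = 1) (hY : ∑ j, u j / pY j < 1)
    {i : Fin m} (hi : pX i = pXmax pX) :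
    ∃ v : Fin m → ℝ, ∃ t : ℝ, (∀ j, 0 ≤ v j) ∧ (∑ j, v j / pX j) = 1 ∧
      (∑ j, v j / pY j) ≤ 1 ∧ 0 < t ∧ t < 1 ∧
      (∑ j, v j) = (1 - t) * (∑ j, u j) + t * pXmax pX ∧ t * pXmax pX ≤ v i := by
  have hMpos : 0 < pXmax pX := pXmax_pos hm hpX
  set M := pXmax pX with hMdef
  set s := ∑ j, u j / pY j with hsdef
  set c := M / pY i with hcdef
  have hcpos : 0 < c := div_pos hMpos (hpY i)
  have hden : 0 < c + 1 - s := by linarith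
  set t := (1 - s) / (c + 1 - s) with htdef
  have ht0 : 0 < t := div_pos (by linarith) hden
  have ht1 : t < 1 := (div_lt_one hden).mpr (by linarith)
  set v : Fin m → ℝ := fun j => (1 - t) * u j + (if j = i then t * M else 0) with hvdef
  have hv0 : ∀ j, 0 ≤ v j := by
    intro j
    have h1 : 0 ≤ (1 - t) * u j := mul_nonneg (by linarith) (hu0 j)
    have h2 : (0:ℝ) ≤ (if j = i then t * M else 0) := by
      split_ifs
      · exact (mul_pos ht0 hMpos).le
      · exact le_refl 0
    simp only [hvdef]; linarith
  have hsplit : ∀ (p : Fin m → ℝ), (∀ j, 0 < p j) →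
      (∑ j, v j / p j) = (1 - t) * (∑ j, u j / p j) + t * M / p i := by
    intro p hp
    have : ∀ j, v j / p j = (1 - t) * (u j / p j) + (if j = i then t * M / p j else 0) := by
      intro j
      simp only [hvdef]
      rw [add_div, mul_div_assoc]
      congr 1
      split_ifs <;> simp
    simp_rw [this]
    rw [Finset.sum_add_distrib, ← Finset.mul_sum, Finset.sum_ite_eq' Finset.univ i]
    simp
  refine ⟨v, t, hv0, ?_, ?_, ht0, ht1, ?_, ?_⟩
  · rw [hsplit pX hpX, hX, hi, mul_div_assoc, div_self hMpos.ne']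
    ring
  · rw [hsplit pY hpY]
    have hkey : t * (c - s) ≤ 1 - s := by
      have h1 : (c - s) / (c + 1 - s) ≤ 1 := (div_le_one hden).mpr (by linarith)
      have : t * (c - s) = (1 - s) * ((c - s) / (c + 1 - s)) := by
        rw [htdef]; field_simp
      rw [this]
      calc (1 - s) * ((c - s) / (c + 1 - s)) ≤ (1 - s) * 1 :=
            mul_le_mul_of_nonneg_left h1 (by linarith)
        _ = 1 - s := mul_one _
    have : t * M / pY i = t * c := by rw [hcdef, mul_div_assoc]
    rw [this]; nlinarith
  · simp only [hvdef]
    rw [Finset.sum_add_distrib, ← Finset.mul_sum, Finset.sum_ite_eq' Finset.univ i]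
    simp
  · have hvi : v i = (1 - t) * u i + t * M := by simp [hvdef]
    have := mul_nonneg (a := 1 - t) (b := u i) (by linarith) (hu0 i)
    rw [hvi]; linarith

lemma emax_eq_pXmax (hm : 0 < m) (hpX : ∀ i, 0 < pX i) (hpY : ∀ i, 0 < pY i)
    (hCaseA : CaseA pX pY) : emax pX pY = pXmax pX := by
  obtain ⟨u, ⟨⟨hu0, huX, huY⟩, husum⟩, hX1, hY1⟩ := hCaseA
  obtain ⟨-, i0, hi0⟩ := pXmax_spec (pX := pX) hm
  obtain ⟨v, t, hv0, hvX, hvY, ht0, ht1, hvsum, -⟩ :=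
    pert hm hpX hpY hu0 hX1 hY1 hi0
  have hle := sum_le_emax hm hpX hpY hv0 hvX.le hvY
  rw [hvsum, husum] at hle
  have : t * pXmax pX ≤ t * emax pX pY := by nlinarith
  have h2 : pXmax pX ≤ emax pX pY := le_of_mul_le_mul_left (by linarith [this]) ht0
  exact le_antisymm (emax_le_pXmax hm) h2

lemma Iset_eq (hm : 0 < m) (hpX : ∀ i, 0 < pX i) (hpY : ∀ i, 0 < pY i)
    (hCaseA : CaseA pX pY) : Iset pX pY = {i | pX i = pXmax pX} := by
  have hM := emax_eq_pXmax hm hpX hpY hCaseA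
  have hMpos : 0 < pXmax pX := pXmax_pos hm hpX
  obtain ⟨hle, -⟩ := pXmax_spec (pX := pX) hm
  ext i
  constructor
  · rintro ⟨u, ⟨⟨hu0, huX, huY⟩, husum⟩, hui⟩
    have h3 : ∑ j, u j = pXmax pX := by rw [husum, hM]
    have h1 : ∀ j ∈ Finset.univ, u j ≤ pXmax pX * (u j / pX j) := by
      intro j _
      have hq : 0 ≤ u j / pX j := div_nonneg (hu0 j) (hpX j).le
      have e : pX j * (u j / pX j) = u j := by
        rw [mul_comm, div_mul_cancel₀ _ (hpX j).ne']
      calc u j = pX j * (u j / pX j) := e.symm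
        _ ≤ pXmax pX * (u j / pX j) := mul_le_mul_of_nonneg_right (hle j) hq
    have h2 : ∑ j, pXmax pX * (u j / pX j) ≤ pXmax pX := by
      rw [← Finset.mul_sum]
      calc pXmax pX * (∑ j, u j / pX j) ≤ pXmax pX * 1 :=
            mul_le_mul_of_nonneg_left huX hMpos.le
        _ = pXmax pX := mul_one _
    have heq : ∑ j, u j = ∑ j, pXmax pX * (u j / pX j) :=
      le_antisymm (Finset.sum_le_sum h1) (by rw [h3]; exact h2)
    have hterm := (Finset.sum_eq_sum_iff_of_le h1).mp heq i (Finset.mem_univ i)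
    -- u i = pXmax * (u i / pX i) and u i = pX i * (u i / pX i), u i > 0
    have hq : 0 < u i / pX i := div_pos hui (hpX i)
    have hui' : u i = pX i * (u i / pX i) := by
      rw [mul_comm, div_mul_cancel₀ _ (hpX i).ne']
    exact mul_right_cancel₀ hq.ne' (hui'.symm.trans hterm)
  · intro hi
    obtain ⟨u, ⟨⟨hu0, huX, huY⟩, husum⟩, hX1, hY1⟩ := hCaseA
    obtain ⟨v, t, hv0, hvX, hvY, ht0, ht1, hvsum, hvi⟩ :=
      pert hm hpX hpY hu0 hX1 hY1 hi
    refine ⟨v, ⟨⟨hv0, hvX.le, hvY⟩, ?_⟩, ?_⟩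
    · rw [hvsum, husum, hM]; ring
    · calc (0:ℝ) < t * pXmax pX := mul_pos ht0 hMpos
        _ ≤ v i := hvi

end AuxCaseA

/-- In Case a), `J = {λ^X : ∃ λ^Y, (λ^X, λ^Y) ∈ K_{Λ²}}`. -/
theorem caseA_Jset_eq
    (m : ℕ) (hm : 2 ≤ m)
    (pX pY : Fin m → ℝ)
    (hpX : ∀ i, 0 < pX i) (hpY : ∀ i, 0 < pY i)
    (hpXsum : ∑ i, pX i = 1) (hpYsum : ∑ i, pY i = 1)
    (hCaseA : CaseA pX pY) :
    Jset pX pY = {lX | ∃ lY ∈ Lam m, (lX, lY) ∈ Kset pX pY} := by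
  have hm0 : 0 < m := lt_of_lt_of_le (by norm_num) hm
  have hM := emax_eq_pXmax hm0 hpX hpY hCaseA
  have hI := Iset_eq hm0 hpX hpY hCaseA
  have hMpos : 0 < pXmax pX := pXmax_pos hm0 hpX
  have hm' : (0:ℝ) < m := by exact_mod_cast hm0
  obtain ⟨hle, -⟩ := pXmax_spec (pX := pX) hm0
  ext lX
  simp only [Set.mem_setOf_eq]
  constructor
  · rintro ⟨⟨hn, hs⟩, hz, hIsum⟩
    set F := Finset.univ.filter (· ∈ Iset pX pY) with hF
    have hzF : ∀ i ∈ Finset.univ, i ∉ F → lX i = 0 := by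
      intro i _ hiF
      refine hz i fun hiI => hiF ?_
      simp [hF, hiI]
    have hpXF : ∀ i ∈ F, pX i = pXmax pX := by
      intro i hiF
      have h' : i ∈ Iset pX pY := by simpa [hF] using hiF
      rw [hI] at h'; exact h'
    set s := ∑ i, pX i * lX i / pY i with hsdef
    have hs_eq : s = pXmax pX * ∑ i ∈ F, lX i / pY i := by
      rw [hsdef, ← Finset.sum_subset (Finset.filter_subset _ _)
        (fun i hi hiF => by rw [hzF i hi hiF]; ring)]
      rw [Finset.mul_sum]
      refine Finset.sum_congr rfl fun i hiF => ?_
      rw [hpXF i hiF, mul_div_assoc]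
    have hs1 : s ≤ 1 := by
      rw [hs_eq]
      calc pXmax pX * ∑ i ∈ F, lX i / pY i ≤ pXmax pX * (1 / pXmax pX) :=
            mul_le_mul_of_nonneg_left hIsum hMpos.le
        _ = 1 := by field_simp
    have hsnn : 0 ≤ s := Finset.sum_nonneg fun i _ =>
      div_nonneg (mul_nonneg (hpX i).le (hn i)) (hpY i).le
    set lY : Fin m → ℝ := fun i => pX i * lX i / pY i + (1 - s) / m with hlY
    have hlYmem : lY ∈ Lam m := by
      refine ⟨fun i => ?_, ?_⟩
      · have h1 : 0 ≤ pX i * lX i / pY i :=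
          div_nonneg (mul_nonneg (hpX i).le (hn i)) (hpY i).le
        have h2 : 0 ≤ (1 - s) / m := div_nonneg (by linarith) hm'.le
        simp only [hlY]; linarith
      · simp only [hlY]
        rw [Finset.sum_add_distrib, Finset.sum_const, Finset.card_univ, Fintype.card_fin,
          nsmul_eq_mul, mul_div_cancel₀ _ hm'.ne', ← hsdef]
        ring
    have hmin : ∀ i, min (pX i * lX i) (pY i * lY i) = pX i * lX i := by
      intro i
      refine min_eq_left ?_
      have he : pY i * lY i = pX i * lX i + pY i * ((1 - s) / m) := by
        simp only [hlY]
        rw [mul_add, mul_comm (pY i) (pX i * lX i / pY i), div_mul_cancel₀ _ (hpY i).ne']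
      have hnn : 0 ≤ pY i * ((1 - s) / m) :=
        mul_nonneg (hpY i).le (div_nonneg (by linarith) hm'.le)
      rw [he]; linarith
    refine ⟨lY, hlYmem, ⟨⟨hn, hs⟩, hlYmem⟩, ?_⟩
    have hfo : fobj pX pY (lX, lY) = ∑ i, pX i * lX i :=
      Finset.sum_congr rfl fun i _ => hmin i
    rw [hfo, hM]
    rw [← Finset.sum_subset (Finset.filter_subset (· ∈ Iset pX pY) Finset.univ)
      (fun i hi hiF => by rw [hzF i hi hiF]; ring)]
    calc ∑ i ∈ F, pX i * lX i = ∑ i ∈ F, pXmax pX * lX i :=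
          Finset.sum_congr rfl fun i hiF => by rw [hpXF i hiF]
      _ = pXmax pX * ∑ i ∈ F, lX i := by rw [Finset.mul_sum]
      _ = pXmax pX * ∑ i, lX i := by
          rw [Finset.sum_subset (Finset.filter_subset _ _) (fun i hi hiF => hzF i hi hiF)]
      _ = pXmax pX := by rw [hs, mul_one]
  · rintro ⟨lY, hlYmem, ⟨hXY, hf⟩⟩
    obtain ⟨hXLam, hYLam⟩ := hXY
    obtain ⟨hn, hs1⟩ := hXLam
    obtain ⟨hnY, hsY1⟩ := hYLam
    set u : Fin m → ℝ := fun i => min (pX i * lX i) (pY i * lY i) with hu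
    have hu0 : ∀ i, 0 ≤ u i := fun i =>
      le_min (mul_nonneg (hpX i).le (hn i)) (mul_nonneg (hpY i).le (hnY i))
    have hSu : ∑ i, u i = pXmax pX := by
      rw [show (∑ i, u i) = fobj pX pY (lX, lY) from rfl, hf, hM]
    have huXle : ∀ i, u i / pX i ≤ lX i := by
      intro i
      rw [div_le_iff₀ (hpX i), mul_comm]
      exact min_le_left _ _
    have huX : ∑ i, u i / pX i ≤ 1 := by
      calc ∑ i, u i / pX i ≤ ∑ i, lX i := Finset.sum_le_sum fun i _ => huXle i
        _ = 1 := hs1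
    have huY : ∑ i, u i / pY i ≤ 1 := by
      refine le_trans (Finset.sum_le_sum fun i _ => ?_) hsY1.le
      rw [div_le_iff₀ (hpY i), mul_comm]
      exact min_le_right _ _
    have h1 : ∀ j ∈ Finset.univ, u j ≤ pXmax pX * (u j / pX j) := by
      intro j _
      have hq : 0 ≤ u j / pX j := div_nonneg (hu0 j) (hpX j).le
      have e : pX j * (u j / pX j) = u j := by
        rw [mul_comm, div_mul_cancel₀ _ (hpX j).ne']
      calc u j = pX j * (u j / pX j) := e.symm
        _ ≤ pXmax pX * (u j / pX j) := mul_le_mul_of_nonneg_right (hle j) hq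
    have h2 : ∑ j, pXmax pX * (u j / pX j) ≤ pXmax pX := by
      rw [← Finset.mul_sum]
      calc pXmax pX * (∑ j, u j / pX j) ≤ pXmax pX * 1 :=
            mul_le_mul_of_nonneg_left huX hMpos.le
        _ = pXmax pX := mul_one _
    have heq : ∑ j, u j = ∑ j, pXmax pX * (u j / pX j) :=
      le_antisymm (Finset.sum_le_sum h1) (h2.trans hSu.ge)
    have hterm : ∀ j, u j = pXmax pX * (u j / pX j) := fun j =>
      (Finset.sum_eq_sum_iff_of_le h1).mp heq j (Finset.mem_univ j)
    have hsupp : ∀ j, 0 < u j → pX j = pXmax pX := by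
      intro j hj
      have hq : 0 < u j / pX j := div_pos hj (hpX j)
      have e : u j = pX j * (u j / pX j) := by
        rw [mul_comm, div_mul_cancel₀ _ (hpX j).ne']
      exact mul_right_cancel₀ hq.ne' (e.symm.trans (hterm j))
    have hSuX1 : ∑ j, u j / pX j = 1 := by
      have e : pXmax pX * ∑ j, u j / pX j = pXmax pX * 1 := by
        rw [mul_one, Finset.mul_sum, ← heq, hSu]
      exact mul_left_cancel₀ hMpos.ne' e
    have heq2 : ∑ j, u j / pX j = ∑ j, lX j := by rw [hSuX1, hs1]
    have hterm2 : ∀ j, u j / pX j = lX j := fun j =>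
      (Finset.sum_eq_sum_iff_of_le fun j _ => huXle j).mp heq2 j (Finset.mem_univ j)
    refine ⟨⟨hn, hs1⟩, ?_, ?_⟩
    · intro i hiI
      have hpXi : pX i ≠ pXmax pX := fun h => hiI (by rw [hI]; exact h)
      have hui : u i = 0 := by
        by_contra h
        exact hpXi (hsupp i (lt_of_le_of_ne (hu0 i) (Ne.symm h)))
      rw [← hterm2 i, hui, zero_div]
    · have hcong : ∀ i ∈ Finset.univ.filter (· ∈ Iset pX pY),
          lX i / pY i = (u i / pY i) / pXmax pX := by
        intro i hiF
        have hiI : i ∈ Iset pX pY := by simpa using hiF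
        have hpXi : pX i = pXmax pX := by rw [hI] at hiI; exact hiI
        rw [← hterm2 i, hpXi, div_div, div_div, mul_comm]
      rw [Finset.sum_congr rfl hcong]
      calc ∑ i ∈ Finset.univ.filter (· ∈ Iset pX pY), (u i / pY i) / pXmax pX
            ≤ ∑ i, (u i / pY i) / pXmax pX :=
            Finset.sum_le_sum_of_subset_of_nonneg (Finset.filter_subset _ _)
              (fun i _ _ => div_nonneg (div_nonneg (hu0 i) (hpY i).le) hMpos.le)
        _ = (∑ i, u i / pY i) / pXmax pX := by rw [Finset.sum_div]
        _ ≤ 1 / pXmax pX := by gcongr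

end
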